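/- Let n ≥ 3 and let V be a conformal Killing vector on ℝⁿ. Define the first-order operators D_V f = Σ_a V^a ∂_a f + ((n−2)/(2n)) (div V) f and δ_V f = Σ_a V^a ∂_a f + ((n+2)/(2n)) (div V) f. Then for every smooth function f : ℝⁿ → ℝ one has Δ(D_V f) = δ_V(Δ f) as functions on ℝⁿ. In particular D_V maps harmonic functions to harmonic functions. -/

import Mathlib

/-- Partial derivative in the `a`-th coordinate direction. -/
noncomputable def pd {n : ℕ} (a : Fin n) (f : (Fin n → ℝ) → ℝ) : (Fin n → ℝ) → ℝ :=
  fun x => fderiv ℝ f x (Pi.single a (1 : ℝ))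

/-- The Laplacian `Δf = Σ_a ∂_a ∂_a f`. -/
noncomputable def lap {n : ℕ} (f : (Fin n → ℝ) → ℝ) : (Fin n → ℝ) → ℝ :=
  fun x => ∑ a, pd a (pd a f) x

/-- The divergence `div V = Σ_a ∂_a V^a`. -/
noncomputable def divg {n : ℕ} (V : (Fin n → ℝ) → (Fin n → ℝ)) : (Fin n → ℝ) → ℝ :=
  fun x => ∑ a, pd a (fun y => V y a) x

/-- A conformal Killing vector on ℝⁿ: a smooth vector field with
`∂_a V^b + ∂_b V^a = (2/n)(div V) δ_{ab}`. -/
def IsCKV (n : ℕ) (V : (Fin n → ℝ) → (Fin n → ℝ)) : Prop :=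
  ContDiff ℝ (⊤ : ℕ∞) V ∧ ∀ (a b : Fin n) (x : Fin n → ℝ),
    pd a (fun y => V y b) x + pd b (fun y => V y a) x
      = 2 / (n : ℝ) * divg V x * (if a = b then (1 : ℝ) else 0)

/-- `D_V f = Σ_a V^a ∂_a f + ((n−2)/(2n)) (div V) f`. -/
noncomputable def opD {n : ℕ} (V : (Fin n → ℝ) → (Fin n → ℝ)) (f : (Fin n → ℝ) → ℝ) :
    (Fin n → ℝ) → ℝ :=
  fun x => (∑ a, V x a * pd a f x) + ((n : ℝ) - 2) / (2 * n) * divg V x * f x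

/-- `δ_V f = Σ_a V^a ∂_a f + ((n+2)/(2n)) (div V) f`. -/
noncomputable def opDelta {n : ℕ} (V : (Fin n → ℝ) → (Fin n → ℝ)) (f : (Fin n → ℝ) → ℝ) :
    (Fin n → ℝ) → ℝ :=
  fun x => (∑ a, V x a * pd a f x) + ((n : ℝ) + 2) / (2 * n) * divg V x * f x

section Aux
variable {n : ℕ}

lemma pd_smooth {f : (Fin n → ℝ) → ℝ} (hf : ContDiff ℝ (⊤ : ℕ∞) f) (a : Fin n) :
    ContDiff ℝ (⊤ : ℕ∞) (pd a f) := by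
  have h1 : ContDiff ℝ (⊤ : ℕ∞) (fderiv ℝ f) := hf.fderiv_right (by simp)
  exact (ContinuousLinearMap.apply ℝ ℝ (Pi.single a (1:ℝ))).contDiff.comp h1

lemma pd_pd (f : (Fin n → ℝ) → ℝ) (hf : ContDiff ℝ (⊤ : ℕ∞) f) (a b : Fin n) (x : Fin n → ℝ) :
    pd a (pd b f) x = fderiv ℝ (fderiv ℝ f) x (Pi.single a 1) (Pi.single b 1) := by
  have h1 : ContDiff ℝ (⊤ : ℕ∞) (fderiv ℝ f) := hf.fderiv_right (by simp)
  have h2 : HasFDerivAt (fderiv ℝ f) (fderiv ℝ (fderiv ℝ f) x) x :=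
    (h1.differentiable (by simp) x).hasFDerivAt
  have h3 := (ContinuousLinearMap.apply ℝ ℝ (Pi.single b (1:ℝ))).hasFDerivAt.comp x h2
  have h5 : pd b f = fun y => (ContinuousLinearMap.apply ℝ ℝ (Pi.single b (1:ℝ)))
      (fderiv ℝ f y) := rfl
  rw [pd, h5]
  have h4 : (fun y => (ContinuousLinearMap.apply ℝ ℝ (Pi.single b (1:ℝ))) (fderiv ℝ f y))
      = (ContinuousLinearMap.apply ℝ ℝ (Pi.single b (1:ℝ))) ∘ (fderiv ℝ f) := rfl
  rw [h4, h3.fderiv]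
  rfl

lemma pd_comm (f : (Fin n → ℝ) → ℝ) (hf : ContDiff ℝ (⊤ : ℕ∞) f) (a b : Fin n) :
    pd a (pd b f) = pd b (pd a f) := by
  funext x
  rw [pd_pd f hf a b x, pd_pd f hf b a x]
  have h1 : ContDiff ℝ (⊤ : ℕ∞) (fderiv ℝ f) := hf.fderiv_right (by simp)
  exact second_derivative_symmetric (fun y => (hf.differentiable (by simp) y).hasFDerivAt)
    (h1.differentiable (by simp) x).hasFDerivAt _ _

lemma pd_add {f g : (Fin n → ℝ) → ℝ} (hf : ContDiff ℝ (⊤ : ℕ∞) f) (hg : ContDiff ℝ (⊤ : ℕ∞) g)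
    (a : Fin n) : pd a (fun x => f x + g x) = fun x => pd a f x + pd a g x := by
  funext x
  simp only [pd]
  rw [fderiv_fun_add (hf.differentiable (by simp) x) (hg.differentiable (by simp) x)]
  rfl

lemma pd_sub {f g : (Fin n → ℝ) → ℝ} (hf : ContDiff ℝ (⊤ : ℕ∞) f) (hg : ContDiff ℝ (⊤ : ℕ∞) g)
    (a : Fin n) : pd a (fun x => f x - g x) = fun x => pd a f x - pd a g x := by
  funext x
  simp only [pd]
  rw [fderiv_fun_sub (hf.differentiable (by simp) x) (hg.differentiable (by simp) x)]
  rfl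

lemma pd_mul {f g : (Fin n → ℝ) → ℝ} (hf : ContDiff ℝ (⊤ : ℕ∞) f) (hg : ContDiff ℝ (⊤ : ℕ∞) g)
    (a : Fin n) : pd a (fun x => f x * g x) = fun x => pd a f x * g x + f x * pd a g x := by
  funext x
  simp only [pd]
  rw [fderiv_fun_mul (hf.differentiable (by simp) x) (hg.differentiable (by simp) x)]
  simp only [ContinuousLinearMap.add_apply, ContinuousLinearMap.smul_apply, smul_eq_mul]
  ring

lemma pd_const_mul {f : (Fin n → ℝ) → ℝ} (hf : ContDiff ℝ (⊤ : ℕ∞) f) (c : ℝ)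
    (a : Fin n) : pd a (fun x => c * f x) = fun x => c * pd a f x := by
  funext x
  simp only [pd]
  rw [fderiv_const_mul (hf.differentiable (by simp) x)]
  rfl

lemma pd_sum {ι : Type*} (s : Finset ι) {F : ι → (Fin n → ℝ) → ℝ}
    (hF : ∀ i, ContDiff ℝ (⊤ : ℕ∞) (F i)) (a : Fin n) :
    pd a (fun x => ∑ i ∈ s, F i x) = fun x => ∑ i ∈ s, pd a (F i) x := by
  funext x
  simp only [pd]
  rw [fderiv_fun_sum (fun i _ => (hF i).differentiable (by simp) x)]
  simp

lemma lap_sum {ι : Type*} (s : Finset ι) {F : ι → (Fin n → ℝ) → ℝ}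
    (hF : ∀ i, ContDiff ℝ (⊤ : ℕ∞) (F i)) :
    lap (fun x => ∑ i ∈ s, F i x) = fun x => ∑ i ∈ s, lap (F i) x := by
  funext x
  simp only [lap]
  rw [Finset.sum_comm]
  refine Finset.sum_congr rfl (fun b _ => ?_)
  rw [pd_sum s hF b, pd_sum s (fun i => pd_smooth (hF i) b) b]

lemma lap_add {f g : (Fin n → ℝ) → ℝ} (hf : ContDiff ℝ (⊤ : ℕ∞) f) (hg : ContDiff ℝ (⊤ : ℕ∞) g) :
    lap (fun x => f x + g x) = fun x => lap f x + lap g x := by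
  funext x
  simp only [lap]
  rw [← Finset.sum_add_distrib]
  refine Finset.sum_congr rfl (fun b _ => ?_)
  rw [pd_add hf hg b, pd_add (pd_smooth hf b) (pd_smooth hg b) b]

lemma lap_const_mul {f : (Fin n → ℝ) → ℝ} (hf : ContDiff ℝ (⊤ : ℕ∞) f) (c : ℝ) :
    lap (fun x => c * f x) = fun x => c * lap f x := by
  funext x
  simp only [lap]
  rw [Finset.mul_sum]
  refine Finset.sum_congr rfl (fun b _ => ?_)
  rw [pd_const_mul hf c b, pd_const_mul (pd_smooth hf b) c b]

lemma lap_mul {f g : (Fin n → ℝ) → ℝ} (hf : ContDiff ℝ (⊤ : ℕ∞) f) (hg : ContDiff ℝ (⊤ : ℕ∞) g) :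
    lap (fun x => f x * g x) = fun x =>
      lap f x * g x + 2 * (∑ b, pd b f x * pd b g x) + f x * lap g x := by
  funext x
  simp only [lap]
  have key : ∀ b : Fin n, pd b (pd b (fun x => f x * g x)) x
      = pd b (pd b f) x * g x + pd b f x * pd b g x
        + (pd b f x * pd b g x + f x * pd b (pd b g) x) := by
    intro b
    rw [pd_mul hf hg b,
      pd_add ((pd_smooth hf b).mul hg) (hf.mul (pd_smooth hg b)) b,
      pd_mul (pd_smooth hf b) hg b, pd_mul hf (pd_smooth hg b) b]
  rw [Finset.sum_congr rfl (fun b _ => key b)]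
  simp only [Finset.sum_add_distrib, ← Finset.sum_mul, ← Finset.mul_sum]
  ring

lemma lap_pd {f : (Fin n → ℝ) → ℝ} (hf : ContDiff ℝ (⊤ : ℕ∞) f) (a : Fin n) :
    lap (pd a f) = pd a (lap f) := by
  have step : ∀ b : Fin n, pd b (pd b (pd a f)) = pd a (pd b (pd b f)) := by
    intro b
    rw [pd_comm f hf b a, pd_comm (pd b f) (pd_smooth hf b) b a]
  funext x
  have h1 : lap (pd a f) x = ∑ b, pd a (pd b (pd b f)) x := by
    simp only [lap]
    exact Finset.sum_congr rfl (fun b _ => by rw [step b])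
  rw [h1]
  have h2 := pd_sum (Finset.univ) (fun b => pd_smooth (pd_smooth hf b) b) a
    (F := fun b => pd b (pd b f))
  have h3 : lap f = fun x => ∑ b, pd b (pd b f) x := rfl
  rw [h3, h2]

end Aux

section CKV
variable {n : ℕ} {V : (Fin n → ℝ) → (Fin n → ℝ)}

lemma Va_smooth (hV : ContDiff ℝ (⊤ : ℕ∞) V) (a : Fin n) :
    ContDiff ℝ (⊤ : ℕ∞) (fun y => V y a) :=
  (ContinuousLinearMap.proj (R := ℝ) (φ := fun _ : Fin n => ℝ) a).contDiff.comp hV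

lemma divg_smooth (hV : ContDiff ℝ (⊤ : ℕ∞) V) : ContDiff ℝ (⊤ : ℕ∞) (divg V) :=
  ContDiff.sum (fun a _ => pd_smooth (Va_smooth hV a) a)

lemma divg_eq : divg V = fun x => ∑ a, pd a (fun y => V y a) x := rfl

/-- rewrite CKV as: `∂_b V^a = (2/n)δ σ - ∂_a V^b` as functions. -/
lemma ckv_fun (hV : IsCKV n V) (a b : Fin n) :
    pd b (fun y => V y a) = fun x =>
      (2 / (n : ℝ) * (if a = b then (1:ℝ) else 0)) * divg V x - pd a (fun y => V y b) x := by
  funext x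
  have h := hV.2 a b x
  linarith [h]

lemma lap_Va (hn : 3 ≤ n) (hV : IsCKV n V) (a : Fin n) :
    lap (fun y => V y a) = fun x => ((2 - (n : ℝ)) / n) * pd a (divg V) x := by
  have hVs := hV.1
  funext x
  have step : ∀ b : Fin n, pd b (pd b (fun y => V y a)) x
      = (2 / (n : ℝ) * (if a = b then (1:ℝ) else 0)) * pd b (divg V) x
        - pd a (pd b (fun y => V y b)) x := by
    intro b
    rw [ckv_fun hV a b,
      pd_sub ((contDiff_const).mul (divg_smooth hVs)) (pd_smooth (Va_smooth hVs b) a) b,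
      pd_const_mul (divg_smooth hVs) _ b, pd_comm _ (Va_smooth hVs b) b a]
  have h1 : lap (fun y => V y a) x = ∑ b, ((2 / (n : ℝ) * (if a = b then (1:ℝ) else 0)) * pd b (divg V) x
        - pd a (pd b (fun y => V y b)) x) := by
    simp only [lap]
    exact Finset.sum_congr rfl (fun b _ => step b)
  rw [h1, Finset.sum_sub_distrib]
  have h2 : ∑ b, (2 / (n : ℝ) * (if a = b then (1:ℝ) else 0)) * pd b (divg V) x
      = 2 / (n : ℝ) * pd a (divg V) x := by
    rw [Finset.sum_eq_single a]
    · simp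
    · intro b _ hb
      simp [Ne.symm hb]
    · simp
  have h3 : ∑ b, pd a (pd b (fun y => V y b)) x = pd a (divg V) x := by
    have := pd_sum (Finset.univ) (fun b => pd_smooth (Va_smooth hVs b) b) a
      (F := fun b => pd b (fun y => V y b))
    rw [divg_eq, this]
  rw [h2, h3]
  have hn0 : (n : ℝ) ≠ 0 := by
    have : (3:ℝ) ≤ (n:ℝ) := by exact_mod_cast hn
    linarith
  field_simp

lemma lap_divg (hn : 3 ≤ n) (hV : IsCKV n V) : lap (divg V) = 0 := by
  have hVs := hV.1
  have hsm : ∀ a b : Fin n, ContDiff ℝ (⊤ : ℕ∞) (pd b (pd a (fun y => V y a))) :=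
    fun a b => pd_smooth (pd_smooth (Va_smooth hVs a) a) b
  funext x
  have key : lap (divg V) x = ((2 - (n : ℝ)) / n) * lap (divg V) x := by
    have h1 : ∀ b : Fin n, pd b (divg V) = fun x => ∑ a, pd b (pd a (fun y => V y a)) x :=
      fun b => pd_sum Finset.univ (fun a => pd_smooth (Va_smooth hVs a) a) b
    have h2 : ∀ b : Fin n, pd b (pd b (divg V)) x
        = ∑ a, pd b (pd b (pd a (fun y => V y a))) x := by
      intro b
      rw [h1 b]
      rw [pd_sum Finset.univ (fun a => pd_smooth (pd_smooth (Va_smooth hVs a) a) b) b]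
    have h3 : ∀ a b : Fin n, pd b (pd b (pd a (fun y => V y a)))
        = pd a (pd b (pd b (fun y => V y a))) := by
      intro a b
      rw [pd_comm _ (Va_smooth hVs a) b a, pd_comm _ (pd_smooth (Va_smooth hVs a) b) b a]
    have h4 : lap (divg V) x = ∑ a, pd a (lap (fun y => V y a)) x := by
      simp only [lap]
      rw [Finset.sum_congr rfl (fun b _ => h2 b), Finset.sum_comm]
      refine Finset.sum_congr rfl (fun a _ => ?_)
      rw [Finset.sum_congr rfl (fun b _ => congrFun (h3 a b) x)]
      exact (congrFun (pd_sum Finset.univ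
        (fun b => pd_smooth (pd_smooth (Va_smooth hVs a) b) b) a) x).symm
    have h6 : ∀ a : Fin n, pd a (lap (fun y => V y a)) x
        = ((2 - (n : ℝ)) / n) * pd a (pd a (divg V)) x := by
      intro a
      rw [lap_Va hn hV a, pd_const_mul (pd_smooth (divg_smooth hVs) a) _ a]
    calc lap (divg V) x = ∑ a, pd a (lap (fun y => V y a)) x := h4
      _ = ∑ a, ((2 - (n:ℝ))/n) * pd a (pd a (divg V)) x :=
          Finset.sum_congr rfl (fun a _ => h6 a)
      _ = ((2 - (n:ℝ))/n) * lap (divg V) x := by rw [← Finset.mul_sum]; rfl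
  have hn0 : (n : ℝ) ≠ 0 := by
    have : (3:ℝ) ≤ (n:ℝ) := by exact_mod_cast hn
    linarith
  set L := lap (divg V) x with hL
  have h2 : (2 * (n:ℝ) - 2) * L = 0 := by
    field_simp at key
    linear_combination key
  have h7 : (2 * (n:ℝ) - 2) ≠ 0 := by
    have : (3:ℝ) ≤ (n:ℝ) := by exact_mod_cast hn
    linarith
  have : L = 0 := (mul_eq_zero.mp h2).resolve_left h7
  simpa using this

end CKV

section Cross
variable {n : ℕ} {V : (Fin n → ℝ) → (Fin n → ℝ)}

lemma cross (hV : IsCKV n V) {f : (Fin n → ℝ) → ℝ} (hf : ContDiff ℝ (⊤ : ℕ∞) f) (x : Fin n → ℝ) :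
    2 * ∑ a, ∑ b, pd b (fun y => V y a) x * pd b (pd a f) x
      = 2 / (n:ℝ) * divg V x * lap f x := by
  have Hsymm : ∀ a b : Fin n, pd b (pd a f) x = pd a (pd b f) x :=
    fun a b => congrFun (pd_comm f hf b a) x
  have hST : ∑ a, ∑ b, pd b (fun y => V y a) x * pd b (pd a f) x
      = ∑ a, ∑ b, pd a (fun y => V y b) x * pd b (pd a f) x := by
    calc ∑ a, ∑ b, pd b (fun y => V y a) x * pd b (pd a f) x
        = ∑ a, ∑ b, pd b (fun y => V y a) x * pd a (pd b f) x :=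
          Finset.sum_congr rfl fun a _ => Finset.sum_congr rfl fun b _ => by rw [Hsymm a b]
      _ = ∑ b, ∑ a, pd b (fun y => V y a) x * pd a (pd b f) x := Finset.sum_comm
  calc 2 * ∑ a, ∑ b, pd b (fun y => V y a) x * pd b (pd a f) x
      = (∑ a, ∑ b, pd b (fun y => V y a) x * pd b (pd a f) x)
        + ∑ a, ∑ b, pd b (fun y => V y a) x * pd b (pd a f) x := two_mul _
    _ = (∑ a, ∑ b, pd b (fun y => V y a) x * pd b (pd a f) x)
        + ∑ a, ∑ b, pd a (fun y => V y b) x * pd b (pd a f) x := by rw [hST]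
    _ = ∑ a, ∑ b, (pd a (fun y => V y b) x + pd b (fun y => V y a) x) * pd b (pd a f) x := by
        rw [← Finset.sum_add_distrib]
        refine Finset.sum_congr rfl fun a _ => ?_
        rw [← Finset.sum_add_distrib]
        exact Finset.sum_congr rfl fun b _ => by ring
    _ = ∑ a, ∑ b, (2 / (n:ℝ) * divg V x * (if a = b then (1:ℝ) else 0)) * pd b (pd a f) x :=
        Finset.sum_congr rfl fun a _ => Finset.sum_congr rfl fun b _ => by rw [hV.2 a b x]
    _ = ∑ a, 2 / (n:ℝ) * divg V x * pd a (pd a f) x := by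
        refine Finset.sum_congr rfl fun a _ => ?_
        rw [Finset.sum_eq_single a]
        · simp
        · intro b _ hb
          simp [Ne.symm hb]
        · simp
    _ = 2 / (n:ℝ) * divg V x * lap f x := by rw [← Finset.mul_sum]; rfl

end Cross


/-- For a conformal Killing vector `V` on ℝⁿ (n ≥ 3), `Δ(D_V f) = δ_V(Δ f)` for all
smooth `f`; in particular `D_V` maps harmonic functions to harmonic functions. -/
theorem stmt_0 (n : ℕ) (hn : 3 ≤ n) (V : (Fin n → ℝ) → (Fin n → ℝ)) (hV : IsCKV n V)
    (f : (Fin n → ℝ) → ℝ) (hf : ContDiff ℝ (⊤ : ℕ∞) f) :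
    lap (opD V f) = opDelta V (lap f) ∧ (lap f = 0 → lap (opD V f) = 0) := by
  have hVs := hV.1
  have hσ : ContDiff ℝ (⊤ : ℕ∞) (divg V) := divg_smooth hVs
  have hVa : ∀ a : Fin n, ContDiff ℝ (⊤ : ℕ∞) (fun y => V y a) := Va_smooth hVs
  have hn0 : (n : ℝ) ≠ 0 := by
    have : (3:ℝ) ≤ (n:ℝ) := by exact_mod_cast hn
    linarith
  set c : ℝ := ((n : ℝ) - 2) / (2 * n) with hc
  have hF : ∀ a : Fin n, ContDiff ℝ (⊤ : ℕ∞) (fun z => V z a * pd a f z) :=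
    fun a => (hVa a).mul (pd_smooth hf a)
  have hF1 : ContDiff ℝ (⊤ : ℕ∞) (fun z => ∑ a, V z a * pd a f z) :=
    ContDiff.sum (fun a _ => hF a)
  have hG : ContDiff ℝ (⊤ : ℕ∞) (fun z => divg V z * f z) := hσ.mul hf
  have hcG : ContDiff ℝ (⊤ : ℕ∞) (fun z => c * (divg V z * f z)) := contDiff_const.mul hG
  have e1 : opD V f = fun x => (fun z => ∑ a, V z a * pd a f z) x
      + (fun z => c * (divg V z * f z)) x := by
    funext x
    simp only [opD]
    ring
  have e2 : lap (opD V f) = fun x => lap (fun z => ∑ a, V z a * pd a f z) x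
      + lap (fun z => c * (divg V z * f z)) x := by
    rw [e1]; exact lap_add hF1 hcG
  have e3 : lap (fun z => c * (divg V z * f z))
      = fun x => c * lap (fun z => divg V z * f z) x := lap_const_mul hG c
  have e4 : lap (fun z => divg V z * f z) = fun x =>
      lap (divg V) x * f x + 2 * (∑ b, pd b (divg V) x * pd b f x) + divg V x * lap f x :=
    lap_mul hσ hf
  have e5 : lap (fun z => ∑ a, V z a * pd a f z)
      = fun x => ∑ a, lap (fun z => V z a * pd a f z) x :=
    lap_sum Finset.univ hF
  have e6 : ∀ a : Fin n, lap (fun z => V z a * pd a f z) = fun x =>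
      lap (fun z => V z a) x * pd a f x
        + 2 * (∑ b, pd b (fun z => V z a) x * pd b (pd a f) x)
        + V x a * lap (pd a f) x :=
    fun a => lap_mul (hVa a) (pd_smooth hf a)
  have hlapσ : ∀ x, lap (divg V) x = 0 := fun x => by
    have := congrFun (lap_divg hn hV) x
    simpa using this
  have main : lap (opD V f) = opDelta V (lap f) := by
    funext x
    rw [congrFun e2 x, congrFun e3 x, congrFun e4 x, congrFun e5 x]
    have e7 : ∀ a : Fin n, lap (fun z => V z a * pd a f z) x =
        ((2 - (n : ℝ)) / n) * pd a (divg V) x * pd a f x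
          + 2 * (∑ b, pd b (fun z => V z a) x * pd b (pd a f) x)
          + V x a * pd a (lap f) x := by
      intro a
      rw [congrFun (e6 a) x, congrFun (lap_Va hn hV a) x, congrFun (lap_pd hf a) x]
    rw [Finset.sum_congr rfl (fun a _ => e7 a)]
    simp only [Finset.sum_add_distrib]
    have s1 : ∑ a, ((2 - (n : ℝ)) / n) * pd a (divg V) x * pd a f x
        = ((2 - (n : ℝ)) / n) * ∑ a, pd a (divg V) x * pd a f x := by
      rw [Finset.mul_sum]
      exact Finset.sum_congr rfl fun a _ => by ring
    have s2 : ∑ a, 2 * (∑ b, pd b (fun z => V z a) x * pd b (pd a f) x)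
        = 2 / (n:ℝ) * divg V x * lap f x := by
      rw [← Finset.mul_sum]
      exact cross hV hf x
    rw [s1, s2, hlapσ x]
    show _ = opDelta V (lap f) x
    simp only [opDelta]
    rw [hc]
    set A := ∑ a, pd a (divg V) x * pd a f x
    set L := lap f x
    set D := divg V x
    field_simp
    ring
  refine ⟨main, fun h => ?_⟩
  rw [main, h]
  funext x
  have hz : fderiv ℝ (0 : (Fin n → ℝ) → ℝ) = 0 := fderiv_const 0
  simp [opDelta, pd, hz]
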